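/- Let S be a Stallings section for an m-epi π : Ã* → G and let g ∈ G. Then there exists a finite trim Ã-automaton C with a single initial state and a single terminal state such that S_g ⊆ (L(C))‾ ⊆ gπ⁻¹; equivalently, S_g ⊆ (L(C))‾ and (L(C))π = {g}. -/

import Mathlib

/-!  Common framework: words over an involutive alphabet Ã = A ∪ A⁻¹ (modelled as
`α × Bool`), free reduction, matched epimorphisms, Stallings sections and
Ã-automata, following Silva–Soler-Escrivà–Ventura. -/

/-- A word over the involutive alphabet Ã = A ∪ A⁻¹: the letter `(a, tt)` denotes
`a` and `(a, ff)` denotes `a⁻¹` (the `FreeGroup` convention). -/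
abbrev Word (α : Type) : Type := List (α × Bool)

namespace Stallings

instance {β : Type} : HasSubset (Language β) := ⟨fun L M => ∀ w ∈ L, w ∈ M⟩
instance {β : Type} : Union (Language β) := ⟨fun L M => {w | w ∈ L ∨ w ∈ M}⟩
instance {β : Type} : Inter (Language β) := ⟨fun L M => {w | w ∈ L ∧ w ∈ M}⟩
instance {β : Type} : EmptyCollection (Language β) := ⟨(∅ : Set (List β))⟩

variable {α : Type} {G : Type} [Group G]

/-- The formal inverse of a letter of Ã. -/
def letterInv (x : α × Bool) : α × Bool := (x.1, !x.2)

/-- The formal inverse `w⁻¹` of a word over Ã. -/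
def wordInv (w : Word α) : Word α := (w.map letterInv).reverse

/-- The free reduction `w̄` of a word over Ã (iterated deletion of factors `a a⁻¹`). -/
noncomputable def redW (w : Word α) : Word α :=
  letI := Classical.decEq α
  FreeGroup.reduce w

/-- The reduction `L̄` of a language over Ã. -/
noncomputable def red (L : Language (α × Bool)) : Language (α × Bool) :=
  redW '' L

/-- The set `R_A` of reduced words over Ã. -/
noncomputable def Reduced : Language (α × Bool) := {w | redW w = w}

/-- Evaluation of a monoid homomorphism `π : Ã* → G` at a word. -/
def ev (π : FreeMonoid (α × Bool) →* G) (w : Word α) : G :=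
  π (FreeMonoid.ofList w)

/-- The image of a language under (evaluation of) `π`. -/
def evImg (π : FreeMonoid (α × Bool) →* G) (L : Language (α × Bool)) : Set G :=
  {g | ∃ w ∈ L, ev π w = g}

/-- A matched epimorphism (m-epi) `π : Ã* → G`: a surjective monoid homomorphism
sending formal inverses to inverses. -/
structure IsMEpi (π : FreeMonoid (α × Bool) →* G) : Prop where
  surjective : Function.Surjective π
  matched : ∀ (a : α) (b : Bool),
    π (FreeMonoid.of (a, !b)) = (π (FreeMonoid.of (a, b)))⁻¹

/-- `S_X = Xπ⁻¹ ∩ S`, for `X ⊆ G`. -/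
def sub (S : Language (α × Bool)) (π : FreeMonoid (α × Bool) →* G) (X : Set G) :
    Language (α × Bool) :=
  {w ∈ S | ev π w ∈ X}

/-- A Stallings section for an m-epi `π : Ã* → G`: a regular section `S ⊆ R_A`
such that each `S_g` is regular (S1), and `S_{gh} ⊆ (S_g S_h)‾` (S2). -/
structure IsStallingsSection (π : FreeMonoid (α × Bool) →* G)
    (S : Language (α × Bool)) : Prop where
  regular : S.IsRegular
  reduced : S ⊆ Reduced
  inv_mem : ∀ w ∈ S, wordInv w ∈ S
  exists_rep : ∀ g : G, ∃ w ∈ S, ev π w = g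
  s1 : ∀ g : G, (sub S π {g}).IsRegular
  s2 : ∀ g h : G, sub S π {g * h} ⊆ red (sub S π {g} * sub S π {h})

/-- A group has a Stallings section if some m-epi onto it (from the free monoid on
an involutive finite alphabet) admits a Stallings section. -/
def HasStallingsSection (G : Type) [Group G] : Prop :=
  ∃ (α : Type) (π : FreeMonoid (α × Bool) →* G) (S : Language (α × Bool)),
    Finite α ∧ IsMEpi π ∧ IsStallingsSection π S

/-- `Pref L`: the set of prefixes of words of `L`. -/
def Pref (L : Language (α × Bool)) : Language (α × Bool) :=
  {u | ∃ v, u ++ v ∈ L}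

/-- An extendable Stallings section: every `u ∈ S` admits a reduced word `v` with
`u vⁿ ∈ S` for all `n` and `u ∈ Pref (S_{(u vⁿ u⁻¹)π})` for almost all `n`. -/
def Extendable (π : FreeMonoid (α × Bool) →* G) (S : Language (α × Bool)) : Prop :=
  ∀ u ∈ S, ∃ v : Word α, v ∈ Reduced ∧
    (∀ n : ℕ, u ++ (List.replicate n v).flatten ∈ S) ∧
    ∃ N : ℕ, ∀ n ≥ N, u ∈ Pref (sub S π {ev π u * (ev π v) ^ n * (ev π u)⁻¹})

/-- An Ã-automaton with state type `Q`, initial state `start`, terminal states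
`accept` and edge set `edges`. -/
structure Automaton (β : Type) (Q : Type) where
  start : Q
  accept : Set Q
  edges : Set (Q × β × Q)

namespace Automaton

variable {β Q : Type}

/-- `M.Path p w q`: there is a path from `p` to `q` labelled `w`. -/
inductive Path (M : Automaton β Q) : Q → List β → Q → Prop
  | nil (q : Q) : Path M q [] q
  | cons {p q r : Q} {a : β} {w : List β} :
      (p, a, q) ∈ M.edges → Path M q w r → Path M p (a :: w) r

/-- The language recognized by an automaton. -/
def lang (M : Automaton β Q) : Language β :=
  {w | ∃ t ∈ M.accept, M.Path M.start w t}

/-- A trim automaton: every state lies on some successful path. -/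
def Trim (M : Automaton β Q) : Prop :=
  ∀ q : Q, ∃ (u v : List β) (t : Q), t ∈ M.accept ∧ M.Path M.start u q ∧ M.Path q v t

/-- An involutive Ã-automaton. -/
def Involutive {α : Type} (M : Automaton (α × Bool) Q) : Prop :=
  ∀ p a q, (p, a, q) ∈ M.edges → (q, letterInv a, p) ∈ M.edges

/-- A deterministic automaton. -/
def Deterministic (M : Automaton β Q) : Prop :=
  ∀ p a q q', (p, a, q) ∈ M.edges → (p, a, q') ∈ M.edges → q = q'

/-- An inverse automaton: involutive, deterministic, trim, with a single
terminal state. -/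
def IsInverse {α : Type} (M : Automaton (α × Bool) Q) : Prop :=
  M.Involutive ∧ M.Deterministic ∧ M.Trim ∧ ∃ t : Q, M.accept = {t}

/-- The automaton obtained by identifying the states `p` and `q` (the quotient is
realized on the same state type, redirecting `q` to `p`). -/
def merge [DecidableEq Q] (M : Automaton β Q) (p q : Q) : Automaton β Q :=
  let f : Q → Q := fun x => if x = q then p else x
  { start := f M.start
    accept := f '' M.accept
    edges := {e | ∃ e' ∈ M.edges, e = (f e'.1, e'.2.1, f e'.2.2)} }

end Automaton

end Stallings


/-!
A DFA for the regular language `S_g` becomes an `Ã`-automaton whose useful part is trim and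
accepts `S_g`. In a trim automaton all of whose accepted words evaluate to `g`, the value of a
word reaching a state `q` does not depend on the word, since it is `g` times the inverse of the
value of any word leading from `q` to a terminal state. This potential takes the value `g` on
every terminal state, so identifying all terminal states keeps it well defined, and every word
accepted by the resulting automaton with a single terminal state still evaluates to `g`.
Reduction does not change values because `π` is matched, and `S_g` consists of reduced words.
-/

namespace Stallings

variable {α G : Type} [Group G]

@[simp]
lemma ev_nil (π : FreeMonoid (α × Bool) →* G) : ev π ([] : Word α) = 1 := map_one π

@[simp]
lemma ev_append (π : FreeMonoid (α × Bool) →* G) (u v : Word α) :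
    ev π (u ++ v) = ev π u * ev π v := by
  simp only [ev, FreeMonoid.ofList_append, map_mul]

lemma ev_cons (π : FreeMonoid (α × Bool) →* G) (a : α × Bool) (w : Word α) :
    ev π (a :: w) = π (FreeMonoid.of a) * ev π w := by
  simp only [ev, FreeMonoid.ofList_cons, map_mul]

lemma IsMEpi.ev_eq_of_step {π : FreeMonoid (α × Bool) →* G} (hπ : IsMEpi π)
    {u v : Word α} (h : FreeGroup.Red.Step u v) : ev π u = ev π v := by
  obtain @⟨L₁, L₂, x, b⟩ := h
  simp only [ev_append, ev_cons, hπ.matched x b, mul_inv_cancel_left]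

lemma IsMEpi.ev_redW {π : FreeMonoid (α × Bool) →* G} (hπ : IsMEpi π) (w : Word α) :
    ev π (redW w) = ev π w := by
  classical
  suffices ∀ v, FreeGroup.Red w v → ev π v = ev π w by
    apply this
    unfold redW
    exact FreeGroup.reduce.red
  intro v hv
  induction hv with
  | refl => rfl
  | tail _ hstep ih => exact (hπ.ev_eq_of_step hstep).symm.trans ih

namespace Automaton

variable {β Q R : Type}

lemma Path.append {M : Automaton β Q} {p q r : Q} {u v : List β}
    (hu : M.Path p u q) (hv : M.Path q v r) : M.Path p (u ++ v) r := by
  induction hu with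
  | nil => exact hv
  | cons he _ ih => exact .cons he (ih hv)

lemma Path.map {M : Automaton β Q} {N : Automaton β R} (f : Q → R)
    (hf : ∀ p a q, (p, a, q) ∈ M.edges → (f p, a, f q) ∈ N.edges)
    {p q : Q} {w : List β} (h : M.Path p w q) : N.Path (f p) w (f q) := by
  induction h with
  | nil => exact .nil _
  | cons he _ ih => exact .cons (hf _ _ _ he) ih

lemma Trim.accept_nonempty {M : Automaton β Q} (h : M.Trim) : M.accept.Nonempty :=
  let ⟨_, _, t, ht, _⟩ := h M.start
  ⟨t, ht⟩

def ofDFA {σ : Type} (D : DFA β σ) : Automaton β σ where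
  start := D.start
  accept := D.accept
  edges := {e | e.2.2 = D.step e.1 e.2.1}

lemma path_ofDFA_iff {σ : Type} (D : DFA β σ) {p q : σ} {w : List β} :
    (ofDFA D).Path p w q ↔ D.evalFrom p w = q := by
  induction w generalizing p with
  | nil =>
    refine ⟨fun h => ?_, fun h => h ▸ .nil p⟩
    cases h
    rfl
  | cons a w ih =>
    have hstep : (p, a, D.step p a) ∈ (ofDFA D).edges := rfl
    refine ⟨fun h => ?_, fun h => .cons hstep (ih.2 h)⟩
    obtain _ | ⟨he, hw⟩ := h
    rw [DFA.evalFrom_cons, ← show _ = D.step p a from he]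
    exact ih.1 hw

@[simp]
lemma lang_ofDFA {σ : Type} (D : DFA β σ) : (ofDFA D).lang = D.accepts := by
  ext w
  simp only [lang, path_ofDFA_iff, exists_eq_right', DFA.mem_accepts, DFA.eval]
  rfl

def IsUseful (M : Automaton β Q) (q : Q) : Prop :=
  (∃ u, M.Path M.start u q) ∧ ∃ v, ∃ t ∈ M.accept, M.Path q v t

lemma isUseful_start_of_mem_lang {M : Automaton β Q} {w : List β} (hw : w ∈ M.lang) :
    M.IsUseful M.start :=
  let ⟨t, ht, hp⟩ := hw
  ⟨⟨[], .nil _⟩, w, t, ht, hp⟩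

lemma isUseful_of_accept {M : Automaton β Q} {t : Q} {u : List β}
    (hu : M.Path M.start u t) (ht : t ∈ M.accept) : M.IsUseful t :=
  ⟨⟨u, hu⟩, [], t, ht, .nil t⟩

def useful (M : Automaton β Q) (h : M.IsUseful M.start) : Automaton β {q // M.IsUseful q} where
  start := ⟨M.start, h⟩
  accept := {q | q.1 ∈ M.accept}
  edges := {e | (e.1.1, e.2.1, e.2.2.1) ∈ M.edges}

variable {M : Automaton β Q} {h : M.IsUseful M.start}

/-- A path between useful states only visits useful states. -/
lemma Path.useful {p q : Q} {w : List β} (hpq : M.Path p w q) (hp : M.IsUseful p)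
    (hq : M.IsUseful q) : (M.useful h).Path ⟨p, hp⟩ w ⟨q, hq⟩ := by
  induction hpq with
  | nil => exact .nil _
  | @cons p r q a w he hrq ih =>
    obtain ⟨u, hu⟩ := hp.1
    obtain ⟨v, t, ht, hv⟩ := hq.2
    have hr : M.IsUseful r :=
      ⟨⟨u ++ [a], hu.append (.cons he (.nil r))⟩, w ++ v, t, ht, hrq.append hv⟩
    have he' : ((⟨p, hp⟩ : {q // M.IsUseful q}), a, ⟨r, hr⟩) ∈ (M.useful h).edges := he
    exact .cons he' (ih hr hq)

lemma useful_trim : (M.useful h).Trim := by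
  rintro ⟨q, hq⟩
  obtain ⟨⟨u, hu⟩, v, t, ht, hv⟩ := hq
  have htu : M.IsUseful t := isUseful_of_accept (hu.append hv) ht
  exact ⟨u, v, ⟨t, htu⟩, ht, hu.useful h _, hv.useful _ htu⟩

@[simp]
lemma lang_useful : (M.useful h).lang = M.lang := by
  ext w
  constructor
  · rintro ⟨t, ht, hp⟩
    exact ⟨t.1, ht, hp.map Subtype.val fun _ _ _ he => he⟩
  · rintro ⟨t, ht, hp⟩
    exact ⟨⟨t, isUseful_of_accept hp ht⟩, ht, hp.useful h _⟩

def map (f : Q → R) (M : Automaton β Q) : Automaton β R where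
  start := f M.start
  accept := f '' M.accept
  edges := (fun e => (f e.1, e.2.1, f e.2.2)) '' M.edges

lemma Path.to_map {M : Automaton β Q} (f : Q → R) {p q : Q} {w : List β}
    (hpq : M.Path p w q) : (M.map f).Path (f p) w (f q) :=
  hpq.map f fun _ _ _ he => Set.mem_image_of_mem (fun e => (f e.1, e.2.1, f e.2.2)) he

lemma lang_subset_lang_map (M : Automaton β Q) (f : Q → R) : M.lang ⊆ (M.map f).lang :=
  fun _ ⟨t, ht, hp⟩ => ⟨f t, ⟨t, ht, rfl⟩, hp.to_map f⟩

lemma Trim.map {M : Automaton β Q} (hM : M.Trim) {f : Q → R} (hf : f.Surjective) :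
    (M.map f).Trim := by
  intro r
  obtain ⟨q, rfl⟩ := hf r
  obtain ⟨u, v, t, ht, hu, hv⟩ := hM q
  exact ⟨u, v, f t, ⟨t, ht, rfl⟩, hu.to_map f, hv.to_map f⟩

open Classical in
noncomputable def collapseAccept (M : Automaton β Q) (q : Q) : Option {q // q ∉ M.accept} :=
  if hq : q ∈ M.accept then none else some ⟨q, hq⟩

lemma collapseAccept_of_mem {M : Automaton β Q} {q : Q} (hq : q ∈ M.accept) :
    M.collapseAccept q = none :=
  dif_pos hq

lemma collapseAccept_of_not_mem {M : Automaton β Q} {q : Q} (hq : q ∉ M.accept) :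
    M.collapseAccept q = some ⟨q, hq⟩ :=
  dif_neg hq

lemma collapseAccept_surjective {M : Automaton β Q} (hM : M.accept.Nonempty) :
    M.collapseAccept.Surjective := by
  rintro (_ | ⟨q, hq⟩)
  · obtain ⟨t, ht⟩ := hM
    exact ⟨t, collapseAccept_of_mem ht⟩
  · exact ⟨q, collapseAccept_of_not_mem hq⟩

lemma accept_map_collapseAccept {M : Automaton β Q} (hM : M.accept.Nonempty) :
    (M.map M.collapseAccept).accept = {none} := by
  ext o
  simp only [map, Set.mem_image, Set.mem_singleton_iff]
  constructor
  · rintro ⟨t, ht, rfl⟩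
    exact collapseAccept_of_mem ht
  · rintro rfl
    obtain ⟨t, ht⟩ := hM
    exact ⟨t, ht, collapseAccept_of_mem ht⟩

end Automaton

open Automaton

structure IsPotential {Q : Type} (π : FreeMonoid (α × Bool) →* G)
    (M : Automaton (α × Bool) Q) (g : G) (V : Q → G) : Prop where
  start : V M.start = 1
  edge : ∀ p a q, (p, a, q) ∈ M.edges → V q = V p * π (FreeMonoid.of a)
  accept : ∀ t ∈ M.accept, V t = g

namespace IsPotential

variable {Q R : Type} {π : FreeMonoid (α × Bool) →* G} {M : Automaton (α × Bool) Q} {g : G}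
  {V : Q → G}

lemma path (hV : IsPotential π M g V) {p q : Q} {w : Word α} (hpq : M.Path p w q) :
    V q = V p * ev π w := by
  induction hpq with
  | nil => rw [ev_nil, mul_one]
  | cons he _ ih => rw [ih, hV.edge _ _ _ he, ev_cons, mul_assoc]

lemma ev_eq_of_mem_lang (hV : IsPotential π M g V) {w : Word α} (hw : w ∈ M.lang) :
    ev π w = g := by
  obtain ⟨t, ht, hp⟩ := hw
  rw [← hV.accept t ht, hV.path hp, hV.start, one_mul]

lemma map (hV : IsPotential π M g V) {f : Q → R} {V' : R → G} (hfV : ∀ q, V' (f q) = V q) :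
    IsPotential π (M.map f) g V' where
  start := (hfV _).trans hV.start
  edge := by
    rintro _ a _ ⟨⟨p, a, q⟩, he, h⟩
    cases h
    rw [hfV, hfV]
    exact hV.edge p a q he
  accept := by
    rintro _ ⟨t, ht, rfl⟩
    rw [hfV]
    exact hV.accept t ht

lemma map_collapseAccept (hV : IsPotential π M g V) :
    IsPotential π (M.map M.collapseAccept) g (fun o => o.elim g (V ∘ Subtype.val)) := by
  refine hV.map fun q => ?_
  by_cases hq : q ∈ M.accept
  · rw [collapseAccept_of_mem hq]
    exact (hV.accept q hq).symm
  · rw [collapseAccept_of_not_mem hq]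
    rfl

end IsPotential

/-- The value of a word reaching a state `q` is `g` times the inverse of the value of any word
leading from `q` to a terminal state, so it depends on `q` only. -/
lemma Automaton.Trim.exists_isPotential {Q : Type} {π : FreeMonoid (α × Bool) →* G}
    {M : Automaton (α × Bool) Q} (hM : M.Trim) {g : G} (hL : ∀ w ∈ M.lang, ev π w = g) :
    ∃ V, IsPotential π M g V := by
  have hcomplete : ∀ q u v t, M.Path M.start u q → t ∈ M.accept → M.Path q v t →
      ev π u * ev π v = g := fun q u v t hu ht hv =>
    (ev_append π u v).symm.trans (hL _ ⟨t, ht, hu.append hv⟩)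
  choose u v t ht hu hv using hM
  have hval : ∀ q w, M.Path M.start w q → ev π w = ev π (u q) := fun q w hw =>
    mul_right_cancel ((hcomplete q w _ _ hw (ht q) (hv q)).trans
      (hcomplete q _ _ _ (hu q) (ht q) (hv q)).symm)
  refine ⟨fun q => ev π (u q), ?_, fun p a q he => ?_, fun s hs => ?_⟩
  · exact (hval _ [] (.nil _)).symm.trans (ev_nil π)
  · rw [← hval q _ ((hu p).append (.cons he (.nil q))), ev_append, ev_cons, ev_nil, mul_one]
  · simpa using hcomplete s _ [] s (hu s) hs (.nil s)

theorem Automaton.exists_uniterminal_of_forall_ev_eq {Q : Type} [Finite Q]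
    {π : FreeMonoid (α × Bool) →* G} (M : Automaton (α × Bool) Q) {w₀ : Word α}
    (hw₀ : w₀ ∈ M.lang) {g : G} (hL : ∀ w ∈ M.lang, ev π w = g) :
    ∃ (R : Type) (_ : Fintype R) (C : Automaton (α × Bool) R) (t : R),
      C.accept = {t} ∧ C.Trim ∧ M.lang ⊆ C.lang ∧ ∀ w ∈ C.lang, ev π w = g := by
  let T := M.useful (isUseful_start_of_mem_lang hw₀)
  have hT : T.Trim := useful_trim
  obtain ⟨V, hV⟩ := hT.exists_isPotential (lang_useful (M := M) ▸ hL)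
  refine ⟨_, Fintype.ofFinite _, T.map T.collapseAccept, none,
    accept_map_collapseAccept hT.accept_nonempty,
    hT.map (collapseAccept_surjective hT.accept_nonempty), fun w hw => ?_,
    fun w hw => hV.map_collapseAccept.ev_eq_of_mem_lang hw⟩
  exact lang_subset_lang_map T _ w (lang_useful (M := M) ▸ hw)

end Stallings

open Stallings in
theorem exists_uniterminal_automaton_general {α G : Type} [Group G]
    (π : FreeMonoid (α × Bool) →* G) (hπ : IsMEpi π)
    (S : Language (α × Bool)) (hS : IsStallingsSection π S) (g : G) :
    ∃ (Q : Type) (_ : Fintype Q) (M : Automaton (α × Bool) Q) (t : Q),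
      M.accept = {t} ∧ M.Trim ∧
      sub S π {g} ⊆ red M.lang ∧ ∀ w ∈ red M.lang, ev π w = g := by
  obtain ⟨σ, _, D, hD⟩ := hS.s1 g
  have hD' : ∀ w, w ∈ (Automaton.ofDFA D).lang ↔ w ∈ sub S π {g} := by
    simp only [Automaton.lang_ofDFA, hD, implies_true]
  obtain ⟨w₀, hw₀⟩ := hS.exists_rep g
  obtain ⟨R, _, C, t, hC_accept, hC_trim, hDC, hC⟩ :=
    (Automaton.ofDFA D).exists_uniterminal_of_forall_ev_eq ((hD' w₀).2 hw₀)
      fun w hw => ((hD' w).1 hw).2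
  refine ⟨R, inferInstance, C, t, hC_accept, hC_trim, fun w hw => ?_, ?_⟩
  · exact ⟨w, hDC w ((hD' w).2 hw), hS.reduced w hw.1⟩
  · rintro _ ⟨w, hw, rfl⟩
    rw [hπ.ev_redW]
    exact hC w hw

open Stallings in
/-- Let `S` be a Stallings section for the m-epi `π` and `g ∈ G`.
There is a finite trim Ã-automaton `C` with a single initial state and a single
terminal state such that `S_g ⊆ (L(C))‾ ⊆ gπ⁻¹`. -/
theorem exists_uniterminal_automaton {α G : Type} [Finite α] [Group G]
    (π : FreeMonoid (α × Bool) →* G) (hπ : IsMEpi π)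
    (S : Language (α × Bool)) (hS : IsStallingsSection π S) (g : G) :
    ∃ (Q : Type) (_ : Fintype Q) (M : Automaton (α × Bool) Q) (t : Q),
      M.accept = {t} ∧ M.Trim ∧
      sub S π {g} ⊆ red M.lang ∧ ∀ w ∈ red M.lang, ev π w = g :=
  exists_uniterminal_automaton_general π hπ S hS g
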